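/- Let Γ be a finite graph with vertex set V, A(Γ) the right-angled Artin group on Γ, and u, v ∈ V distinct vertices. Then the conjugates u^x and v^y (for x, y ∈ A(Γ)) commute if and only if [u,v] = 1 and x y^{-1} ∈ Z(u) Z(v), where Z(w) denotes the centralizer of w in A(Γ). -/

import Mathlib

open scoped commutatorElement

/-- The set of commutator relations of a right-angled Artin group on a graph. -/
def raagRels {α : Type*} (Γ : SimpleGraph α) : Set (FreeGroup α) :=
  {r | ∃ u v : α, Γ.Adj u v ∧ r = ⁅FreeGroup.of u, FreeGroup.of v⁆}

/-- The right-angled Artin group on the graph `Γ`. -/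
def Raag {α : Type*} (Γ : SimpleGraph α) : Type _ := PresentedGroup (raagRels Γ)

instance {α : Type*} (Γ : SimpleGraph α) : Group (Raag Γ) :=
  inferInstanceAs (Group (PresentedGroup (raagRels Γ)))

/-- The standard generator of `Raag Γ` corresponding to a vertex. -/
def Raag.of {α : Type*} (Γ : SimpleGraph α) (v : α) : Raag Γ := PresentedGroup.of v

/-- The commutation graph of a subset `X` of a group `G`. -/
def commGraph (G : Type*) [Group G] (X : Set G) : SimpleGraph X where
  Adj x y := x ≠ y ∧ Commute x.1 y.1
  symm := ⟨fun _ _ ⟨h1, h2⟩ => ⟨h1.symm, h2.symm⟩⟩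
  loopless := ⟨fun _ ⟨h1, _⟩ => h1 rfl⟩

/-- The natural homomorphism `A(CG(X)) → G` extending the identity on `X`. -/
def natHom (G : Type*) [Group G] (X : Set G) : Raag (commGraph G X) →* G :=
  PresentedGroup.toGroup (f := Subtype.val) (by
    rintro r ⟨u, v, hadj, rfl⟩
    rw [map_commutatorElement]
    simp only [FreeGroup.lift_apply_of]
    exact commutatorElement_eq_one_iff_commute.mpr hadj.2)

/-- The star of a vertex: vertices equal or adjacent to `v`. -/
def starSet {α : Type*} (Γ : SimpleGraph α) (v : α) : Set α := {w | w = v ∨ Γ.Adj v w}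

/-- The link of a vertex: vertices adjacent to `v`. -/
def linkSet {α : Type*} (Γ : SimpleGraph α) (v : α) : Set α := {w | Γ.Adj v w}

/-- The double of a graph `X` along the star of a vertex `v`:
two copies of the complement of the star, glued along the star. -/
def doubleStar {α : Type*} (X : SimpleGraph α) (v : α) :
    SimpleGraph ((Fin 2 × {w : α // w ∉ starSet X v}) ⊕ {w : α // w ∈ starSet X v}) where
  Adj a b :=
    match a, b with
    | .inl (i, x), .inl (j, y) => i = j ∧ X.Adj x.1 y.1
    | .inl (_, x), .inr y => X.Adj x.1 y.1
    | .inr x, .inl (_, y) => X.Adj x.1 y.1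
    | .inr x, .inr y => X.Adj x.1 y.1
  symm := ⟨by
    rintro (⟨i, x⟩ | x) (⟨j, y⟩ | y) h
    · exact ⟨h.1.symm, h.2.symm⟩
    · exact h.symm
    · exact h.symm
    · exact h.symm⟩
  loopless := ⟨by
    rintro (⟨i, x⟩ | x) h
    · exact X.loopless.irrefl _ h.2
    · exact X.loopless.irrefl _ h⟩

/-- The group element represented by a word (a list of letters with signs). -/
def wprod {α : Type*} (Γ : SimpleGraph α) (l : List (α × Bool)) : Raag Γ :=
  (l.map fun p => if p.2 then Raag.of Γ p.1 else (Raag.of Γ p.1)⁻¹).prod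

/-- The word length of an element of `Raag Γ` with respect to the vertex generators. -/
noncomputable def wordLength {α : Type*} (Γ : SimpleGraph α) (w : Raag Γ) : ℕ :=
  sInf {n | ∃ l : List (α × Bool), l.length = n ∧ wprod Γ l = w}

/-- A word is reduced if its length realizes the word length of the element it represents. -/
def WordReduced {α : Type*} (Γ : SimpleGraph α) (l : List (α × Bool)) : Prop :=
  l.length = wordLength Γ (wprod Γ l)

/-- The right-counting vector of a word: `rcv Γ l i` is the minimal word length of `y`
such that the suffix of `l` from position `i` equals `x * sᵢ^{eᵢ} * y` with `x` in the
subgroup generated by the link of `sᵢ`. -/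
noncomputable def rcv {α : Type*} (Γ : SimpleGraph α) (l : List (α × Bool))
    (i : Fin l.length) : ℕ :=
  sInf {m | ∃ x y : Raag Γ,
    x ∈ Subgroup.closure (Raag.of Γ '' linkSet Γ (l.get i).1) ∧
    wordLength Γ y = m ∧
    wprod Γ (l.drop i) = x * wprod Γ [l.get i] * y}

/-- The exponent used by the inflating map `σ` at position `i` of the word `l`. -/
noncomputable def sigmaExp {α : Type*} (Γ : SimpleGraph α) (M : ℕ) (l : List (α × Bool))
    (i : Fin l.length) : ℤ :=
  if (l.get i).2 then (4 : ℤ) ^ (M - 1 - rcv Γ l i)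
  else -2 * (4 : ℤ) ^ (M - 1 - rcv Γ l i)

/-- The inflating map `σ` applied to a word `l`, as an element of `Raag Γ`. -/
noncomputable def sigmaProd {α : Type*} (Γ : SimpleGraph α) (M : ℕ)
    (l : List (α × Bool)) : Raag Γ :=
  (List.ofFn fun i : Fin l.length => (Raag.of Γ (l.get i).1) ^ (sigmaExp Γ M l i)).prod


/-!
Deleting a vertex `w` splits `A(Γ)` as the amalgam `A(Γ - w) *_{A(lk w)} A(st w)`, in which
`A(st w)` is `A(lk w)` times the central subgroup `⟨w⟩`. Suppose `g` conjugates a generator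
`v ≠ w` into `A(Γ - w)`. Then the letters of a reduced word for `g` can be peeled off on the
right into the centralizer of `v` until `g` lies in `A(Γ - w)`: a letter that cannot be peeled
off makes `g * v * g⁻¹` a reduced word of length at least three, which lies in no factor.
Induction on the number of vertices then gives `Z(u) ≤ A(st u)`, and
`g * v * g⁻¹ ∈ A_S → g ∈ A_S * Z(v)` for every parabolic subgroup `A_S`.

For the theorem put `z = x * y⁻¹`: `u^x` and `v^y` commute iff `u` commutes with `z * v * z⁻¹`.
Then `z * v * z⁻¹ ∈ Z(u) ≤ A(st u)`, so `v ∈ lk u`, and `z ∈ A(st u) * Z(v) ⊆ Z(u) * Z(v)`.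
-/

open Monoid Subgroup

section Group

variable {G : Type*} [Group G]

theorem Commute.conj_mul_eq_conj {z c : G} (h : Commute z c) (a : G) :
    a * z * c * (a * z)⁻¹ = a * c * a⁻¹ := by
  rw [mul_inv_rev, mul_assoc a, h.eq]
  group

theorem commute_conj_iff_commute_conj_mul_inv (a b x y : G) :
    Commute (x⁻¹ * a * x) (y⁻¹ * b * y) ↔ Commute a (x * y⁻¹ * b * (x * y⁻¹)⁻¹) := by
  rw [← Commute.conj_iff x]
  congr! 1 <;> group

theorem Commute.conj_mul_of_mem_centralizer {a b g h : G} (hab : Commute a b)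
    (hg : g ∈ centralizer {a}) (hh : h ∈ centralizer {b}) :
    Commute a (g * h * b * (g * h)⁻¹) := by
  rw [Commute.conj_mul_eq_conj (mem_centralizer_singleton_iff.1 hh), ← Commute.conj_iff g⁻¹]
  convert hab using 1
  · rw [inv_inv, mul_assoc, ← mem_centralizer_singleton_iff.1 hg]
    group
  · group

end Group

namespace Monoid.PushoutI

variable {ι H : Type*} {G : ι → Type*} [Group H] [∀ i, Group (G i)] {φ : ∀ i, H →* G i}

variable (φ) in
def listProd (l : List (Σ i, G i)) : PushoutI φ :=
  (l.map fun p => of p.1 p.2).prod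

variable (φ) in
def IsReducedList (l : List (Σ i, G i)) : Prop :=
  l.IsChain (fun a b => a.1 ≠ b.1) ∧ ∀ p ∈ l, p.2 ∉ (φ p.1).range

def reverseInv (l : List (Σ i, G i)) : List (Σ i, G i) :=
  l.reverse.map fun p => ⟨p.1, p.2⁻¹⟩

@[simp]
theorem listProd_nil : listProd φ [] = 1 := rfl

@[simp]
theorem listProd_cons (p : Σ i, G i) (l : List (Σ i, G i)) :
    listProd φ (p :: l) = of p.1 p.2 * listProd φ l := by
  simp [listProd]

@[simp]
theorem listProd_append (l₁ l₂ : List (Σ i, G i)) :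
    listProd φ (l₁ ++ l₂) = listProd φ l₁ * listProd φ l₂ := by
  simp [listProd]

@[simp]
theorem listProd_reverseInv (l : List (Σ i, G i)) :
    listProd φ (reverseInv l) = (listProd φ l)⁻¹ := by
  induction l with
  | nil => simp [reverseInv]
  | cons p l ih => simp_all [reverseInv]

theorem ofCoprodI_word_prod (w : CoprodI.Word G) : ofCoprodI w.prod = listProd φ w.toList := by
  simp [CoprodI.Word.prod, listProd, map_list_prod, Function.comp_def]

namespace IsReducedList

theorem of_append_left {l₁ l₂ : List (Σ i, G i)} (h : IsReducedList φ (l₁ ++ l₂)) :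
    IsReducedList φ l₁ :=
  ⟨h.1.left_of_append, fun p hp => h.2 p (List.mem_append_left _ hp)⟩

theorem getLast_fst_ne {l : List (Σ i, G i)} {p : Σ i, G i} (hl : IsReducedList φ (l ++ [p])) :
    ∀ q ∈ l.getLast?, q.1 ≠ p.1 :=
  fun q hq => (List.isChain_append.1 hl.1).2.2 q hq p rfl

theorem append_singleton_mul {l : List (Σ i, G i)} {j : ι} {x : G j}
    (hl : IsReducedList φ (l ++ [⟨j, x⟩])) (h : H) :
    IsReducedList φ (l ++ [⟨j, x * φ j h⟩]) := by
  refine ⟨?_, ?_⟩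
  · have hchain := hl.1
    rw [← List.isChain_map Sigma.fst] at hchain ⊢
    simpa using hchain
  · simp only [List.mem_append, List.mem_singleton]
    rintro p (hp | rfl)
    · exact hl.2 p (List.mem_append_left _ hp)
    · rintro ⟨y, hy⟩
      exact hl.2 ⟨j, x⟩ (by simp) ⟨y * h⁻¹, by simp [hy]⟩

theorem reverseInv {l : List (Σ i, G i)} (hl : IsReducedList φ l) :
    IsReducedList φ (reverseInv l) := by
  refine ⟨?_, ?_⟩
  · rw [PushoutI.reverseInv, List.isChain_map, List.isChain_reverse]
    exact hl.1.imp fun _ _ h => h.symm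
  · simp only [PushoutI.reverseInv, List.mem_map, List.mem_reverse]
    rintro _ ⟨p, hp, rfl⟩
    simpa using hl.2 p hp

theorem append_cons_reverseInv {l : List (Σ i, G i)} (hl : IsReducedList φ l) {j : ι}
    {c : G j} (hc : c ∉ (φ j).range) (hlast : ∀ q ∈ l.getLast?, q.1 ≠ j) :
    IsReducedList φ (l ++ ⟨j, c⟩ :: PushoutI.reverseInv l) := by
  have hinv := hl.reverseInv
  refine ⟨List.isChain_append.2 ⟨hl.1, List.isChain_cons.2 ⟨?_, hinv.1⟩, ?_⟩, ?_⟩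
  · simp only [PushoutI.reverseInv, List.head?_map, List.head?_reverse, Option.mem_def,
      Option.map_eq_some_iff]
    rintro _ ⟨q, hq, rfl⟩
    exact (hlast q hq).symm
  · simpa using hlast
  · simp only [List.mem_append, List.mem_cons]
    rintro p (hp | rfl | hp)
    exacts [hl.2 p hp, hc, hinv.2 p hp]

def toWord {l : List (Σ i, G i)} (hl : IsReducedList φ l) : CoprodI.Word G :=
  ⟨l, fun p hp h1 => hl.2 p hp (h1 ▸ one_mem _), hl.1⟩

theorem reduced_toWord {l : List (Σ i, G i)} (hl : IsReducedList φ l) : Reduced φ hl.toWord :=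
  hl.2

variable (hφ : ∀ i, Function.Injective (φ i))
include hφ

theorem map_fst_eq_of_listProd_eq {l₁ l₂ : List (Σ i, G i)} (hl₁ : IsReducedList φ l₁)
    (hl₂ : IsReducedList φ l₂) (h : listProd φ l₁ = listProd φ l₂) :
    l₁.map Sigma.fst = l₂.map Sigma.fst := by
  obtain ⟨d⟩ := NormalWord.transversal_nonempty φ hφ
  obtain ⟨w₁, hw₁, hfst₁⟩ := hl₁.reduced_toWord.exists_normalWord_prod_eq d
  obtain ⟨w₂, hw₂, hfst₂⟩ := hl₂.reduced_toWord.exists_normalWord_prod_eq d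
  have : w₁ = w₂ := NormalWord.prod_injective <| by
    rw [hw₁, hw₂, ofCoprodI_word_prod, ofCoprodI_word_prod]
    exact h
  subst this
  exact hfst₁.symm.trans hfst₂

theorem listProd_notMem_range {l : List (Σ i, G i)} (hl : IsReducedList φ l)
    (hlen : 2 ≤ l.length) (k : ι) : listProd φ l ∉ (of k).range := by
  rintro ⟨g, hg⟩
  by_cases hgr : g ∈ (φ k).range
  · obtain ⟨h, rfl⟩ := hgr
    have := hl.reduced_toWord.eq_empty_of_mem_range hφ
      ⟨h, by rw [← of_apply_eq_base φ k, hg, ofCoprodI_word_prod]; rfl⟩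
    have : l = [] := congrArg CoprodI.Word.toList this
    simp [this] at hlen
  · have hk : IsReducedList φ [⟨k, g⟩] := ⟨List.isChain_singleton _, by simpa using hgr⟩
    have := congrArg List.length (hl.map_fst_eq_of_listProd_eq hφ hk (by simpa using hg.symm))
    simp at this
    omega

theorem conj_notMem_range {l : List (Σ i, G i)} (hl : IsReducedList φ l) (hne : l ≠ [])
    {j : ι} {c : G j} (hc : c ∉ (φ j).range) (hlast : ∀ q ∈ l.getLast?, q.1 ≠ j) (k : ι) :
    listProd φ l * of j c * (listProd φ l)⁻¹ ∉ (of k).range := by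
  have hlen : 2 ≤ (l ++ ⟨j, c⟩ :: PushoutI.reverseInv l).length := by
    have := List.length_pos_iff.2 hne
    simp only [List.length_append, List.length_cons]
    omega
  simpa [mul_assoc] using (hl.append_cons_reverseInv hc hlast).listProd_notMem_range hφ hlen k

end IsReducedList

variable (hφ : ∀ i, Function.Injective (φ i))
include hφ

theorem exists_isReducedList_eq (g : PushoutI φ) :
    ∃ l h, IsReducedList φ l ∧ g = listProd φ l * base φ h := by
  classical
  obtain ⟨d⟩ := NormalWord.transversal_nonempty φ hφ
  set w := NormalWord.equiv (d := d) g⁻¹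
  have hw : w.prod = g⁻¹ := NormalWord.equiv.symm_apply_apply g⁻¹
  have hl : IsReducedList φ w.toList := by
    refine ⟨w.chain_ne, fun p hp hr => w.ne_one p hp ?_⟩
    -- a letter in both `(φ i).range` and the transversal `d.set i` is `1`
    have := (d.compl p.1).1 (a₁ := (⟨p.2, hr⟩, ⟨1, d.one_mem _⟩))
      (a₂ := (⟨1, one_mem _⟩, ⟨p.2, w.normalized p.1 p.2 hp⟩)) (by simp)
    simpa using congrArg (fun x => x.1.1) this
  refine ⟨reverseInv w.toList, w.head⁻¹, hl.reverseInv, ?_⟩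
  rw [listProd_reverseInv, map_inv, ← mul_inv_rev, ← ofCoprodI_word_prod, ← NormalWord.prod, hw,
    inv_inv]

theorem exists_eq_mul_of_conj_mem_range {i : ι} {c : G i} (Z : Subgroup (PushoutI φ))
    (hZ : Z ≤ centralizer {of i c})
    (hi : ∀ t : G i, t * c * t⁻¹ ∈ (φ i).range → ∃ h z, of i z ∈ Z ∧ t = φ i h * z)
    (hj : c ∈ (φ i).range → ∀ j ≠ i, ∀ x : G j, ∃ h z, of j z ∈ Z ∧ x = φ j h * z)
    {g : PushoutI φ} (hg : g * of i c * g⁻¹ ∈ (of i).range) :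
    ∃ a, ∃ z ∈ Z, g = of i a * z := by
  obtain ⟨l, h, hl, rfl⟩ := exists_isReducedList_eq hφ g
  induction l using List.reverseRecOn generalizing h with
  | nil => exact ⟨φ i h, 1, one_mem Z, by simp [of_apply_eq_base]⟩
  | append_singleton l p ih =>
    obtain ⟨j, x⟩ := p
    have hl' := hl.append_singleton_mul h
    have hlast := hl'.getLast_fst_ne
    have hprod : listProd φ (l ++ [⟨j, x⟩]) * base φ h = listProd φ l * of j (x * φ j h) := by
      simp [mul_assoc, of_apply_eq_base]
    rw [hprod] at hg ⊢
    set x' := x * φ j h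
    have peel (h' : H) (z : G j) (hz : of j z ∈ Z) (hx : x' = φ j h' * z) :
        ∃ a, ∃ z ∈ Z, listProd φ l * of j x' = of i a * z := by
      have hsplit : listProd φ l * of j x' = listProd φ l * base φ h' * of j z := by
        rw [hx, map_mul, of_apply_eq_base, mul_assoc]
      rw [hsplit, Commute.conj_mul_eq_conj (mem_centralizer_singleton_iff.1 (hZ hz))] at hg
      obtain ⟨a, z₀, hz₀, he⟩ := ih h' hl'.of_append_left hg
      exact ⟨a, z₀ * of j z, mul_mem hz₀ hz, by rw [hsplit, he, mul_assoc]⟩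
    by_cases hji : j = i
    · subst hji
      by_cases hc' : x' * c * x'⁻¹ ∈ (φ j).range
      · obtain ⟨h', z, hz, hx⟩ := hi x' hc'
        exact peel h' z hz hx
      by_cases hl₀ : l = []
      · exact ⟨x', 1, one_mem Z, by simp [hl₀]⟩
      have := hl'.of_append_left.conj_notMem_range hφ hl₀ hc' hlast j
      exact absurd (by simpa [mul_assoc] using hg) this
    · by_cases hc : c ∈ (φ i).range
      · obtain ⟨h', z, hz, hx⟩ := hj hc j hji x'
        exact peel h' z hz hx
      have := hl'.conj_notMem_range hφ (by simp) hc (by simpa using hji) i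
      exact absurd (by simpa [mul_assoc] using hg) this

end Monoid.PushoutI

theorem image_val_starSet_induce_subset {V : Type*} (Γ : SimpleGraph V) (S : Set V) (u : S) :
    Subtype.val '' starSet (Γ.induce S) u ⊆ starSet Γ u := by
  rintro _ ⟨s, hs | hs, rfl⟩
  · exact Or.inl (congrArg Subtype.val hs)
  · exact Or.inr (by simpa using hs)

namespace Raag

variable {V W K : Type*} [Group K] (Γ : SimpleGraph V) {Δ : SimpleGraph W}

def lift (f : V → K) (hf : ∀ ⦃a b⦄, Γ.Adj a b → Commute (f a) (f b)) : Raag Γ →* K :=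
  PresentedGroup.toGroup (f := f) <| by
    rintro _ ⟨a, b, hab, rfl⟩
    rw [map_commutatorElement, FreeGroup.lift_apply_of, FreeGroup.lift_apply_of,
      commutatorElement_eq_one_iff_commute]
    exact hf hab

@[simp]
theorem lift_of (f : V → K) (hf) (v : V) : lift Γ f hf (of Γ v) = f v :=
  PresentedGroup.toGroup.of _

variable {Γ} in
@[ext]
theorem hom_ext {f g : Raag Γ →* K} (h : ∀ v, f (of Γ v) = g (of Γ v)) : f = g :=
  PresentedGroup.ext h

theorem closure_range_of : closure (Set.range (of Γ)) = ⊤ :=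
  PresentedGroup.closure_range_of _

variable {Γ} in
theorem commute_of_adj {a b : V} (h : Γ.Adj a b) : Commute (of Γ a) (of Γ b) := by
  rw [← commutatorElement_eq_one_iff_commute]
  have : PresentedGroup.mk (raagRels Γ) ⁅FreeGroup.of a, FreeGroup.of b⁆ = 1 :=
    (QuotientGroup.eq_one_iff _).2 (subset_normalClosure ⟨a, b, h, rfl⟩)
  rwa [map_commutatorElement] at this

theorem mem_center_of_forall_commute {g : Raag Γ} (h : ∀ v, Commute g (of Γ v)) :
    g ∈ center (Raag Γ) := by
  have : closure (Set.range (of Γ)) ≤ centralizer {g} := by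
    rw [closure_le]
    rintro _ ⟨v, rfl⟩
    exact mem_centralizer_singleton_iff.2 (h v).eq.symm
  rw [closure_range_of, top_le_iff] at this
  exact mem_center_iff.2 fun x => mem_centralizer_singleton_iff.1 (this ▸ mem_top x)

theorem closure_starSet_le_centralizer_of (u : V) :
    closure (of Γ '' starSet Γ u) ≤ centralizer {of Γ u} := by
  rw [closure_le]
  rintro _ ⟨w, rfl | hw, rfl⟩
  · exact mem_centralizer_singleton_iff.2 rfl
  · exact mem_centralizer_singleton_iff.2 (commute_of_adj hw).eq.symm

theorem mem_of_conj_mem_closure {S : Set V} {v : V} {g : Raag Γ}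
    (h : g * of Γ v * g⁻¹ ∈ closure (of Γ '' S)) : v ∈ S := by
  classical
  by_contra hv
  let count : Raag Γ →* Multiplicative ℤ :=
    lift Γ (fun w => .ofAdd (if w = v then 1 else 0)) fun _ _ _ => .all _ _
  have hS : closure (of Γ '' S) ≤ count.ker := by
    rw [closure_le]
    rintro _ ⟨w, hw, rfl⟩
    simp [count, ne_of_mem_of_not_mem hw hv]
  simpa [count] using hS h

theorem of_mem_closure_iff {S : Set V} {v : V} : of Γ v ∈ closure (of Γ '' S) ↔ v ∈ S :=
  ⟨fun h => mem_of_conj_mem_closure Γ (g := 1) (by simpa using h),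
    fun h => subset_closure ⟨v, h, rfl⟩⟩

def map (f : Γ →g Δ) : Raag Γ →* Raag Δ :=
  lift Γ (fun v => of Δ (f v)) fun _ _ h => commute_of_adj (f.map_adj h)

@[simp]
theorem map_of (f : Γ →g Δ) (v : V) : map Γ f (of Γ v) = of Δ (f v) := lift_of ..

theorem map_closure_of (f : Γ →g Δ) (S : Set V) :
    (closure (of Γ '' S)).map (map Γ f) = closure (of Δ '' (f '' S)) := by
  rw [MonoidHom.map_closure, Set.image_image, Set.image_image]
  simp

theorem range_map (f : Γ →g Δ) : (map Γ f).range = closure (of Δ '' Set.range f) := by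
  rw [MonoidHom.range_eq_map, ← closure_range_of, ← Set.image_univ, map_closure_of,
    Set.image_univ]

noncomputable def retraction (f : Γ ↪g Δ) : Raag Δ →* Raag Γ :=
  open Classical in
  lift Δ (fun w => if h : w ∈ Set.range f then of Γ h.choose else 1) <| by
    intro a b hab
    by_cases ha : a ∈ Set.range f <;> by_cases hb : b ∈ Set.range f <;>
      simp only [ha, hb, dite_true, dite_false, Commute.one_left, Commute.one_right]
    refine commute_of_adj (f.map_adj_iff.1 ?_)
    rwa [ha.choose_spec, hb.choose_spec]

theorem retraction_comp_map (f : Γ ↪g Δ) : (retraction Γ f).comp (map Γ f.toHom) = .id _ := by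
  ext v
  have hv : f.toHom v ∈ Set.range f := ⟨v, rfl⟩
  simp only [retraction, MonoidHom.comp_apply, map_of, lift_of, dif_pos hv, MonoidHom.id_apply]
  exact congrArg (of Γ) (f.injective hv.choose_spec)

theorem map_injective (f : Γ ↪g Δ) : Function.Injective (map Γ f.toHom) :=
  .of_comp (f := retraction Γ f) <| by
    rw [← MonoidHom.coe_comp, retraction_comp_map]
    exact Function.injective_id

def inclusion (S : Set V) : Raag (Γ.induce S) →* Raag Γ :=
  map _ (SimpleGraph.Embedding.induce S).toHom

@[simp]
theorem inclusion_of (S : Set V) (v : S) : inclusion Γ S (of _ v) = of Γ v := map_of ..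

theorem inclusion_injective (S : Set V) : Function.Injective (inclusion Γ S) :=
  map_injective _ _

theorem map_inclusion_closure_of (S : Set V) (T : Set S) :
    (closure (of _ '' T)).map (inclusion Γ S) = closure (of Γ '' (Subtype.val '' T)) :=
  map_closure_of ..

theorem range_inclusion (S : Set V) : (inclusion Γ S).range = closure (of Γ '' S) := by
  rw [inclusion, range_map]
  congr
  exact Subtype.range_coe

theorem inclusion_mem_centralizer_of {S : Set V} {v : S} {z : Raag (Γ.induce S)}
    (hz : z ∈ centralizer {of _ v}) : inclusion Γ S z ∈ centralizer {of Γ v} := by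
  rw [mem_centralizer_singleton_iff] at hz ⊢
  simpa using congrArg (inclusion Γ S) hz

def splitSet (w : V) : Bool → Set V
  | false => {w}ᶜ
  | true => starSet Γ w

theorem linkSet_subset_splitSet (w : V) : ∀ b, linkSet Γ w ⊆ splitSet Γ w b
  | false => fun _ hx => (Γ.ne_of_adj hx).symm
  | true => fun _ hx => Or.inr hx

def splitHom (w : V) (b : Bool) :
    Raag (Γ.induce (linkSet Γ w)) →* Raag (Γ.induce (splitSet Γ w b)) :=
  map _ (Γ.induceHomOfLE (linkSet_subset_splitSet Γ w b)).toHom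

theorem splitHom_injective (w : V) (b : Bool) : Function.Injective (splitHom Γ w b) :=
  map_injective _ _

theorem range_splitHom (w : V) (b : Bool) :
    (splitHom Γ w b).range = closure (of _ '' {s | s.1 ∈ linkSet Γ w}) := by
  rw [splitHom, range_map]
  congr
  ext s
  exact ⟨by rintro ⟨t, rfl⟩; exact t.2, fun hs => ⟨⟨s.1, hs⟩, rfl⟩⟩

theorem exists_eq_splitHom_true_mul_mem_center (w : V) (x : Raag (Γ.induce (splitSet Γ w true))) :
    ∃ h, ∃ z ∈ center _, x = splitHom Γ w true h * z := by
  have htop : (splitHom Γ w true).range ⊔ center _ = ⊤ := by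
    rw [eq_top_iff, ← closure_range_of, closure_le]
    rintro _ ⟨⟨v, hv⟩, rfl⟩
    by_cases h : v = w
    · subst h
      refine mem_sup_right (mem_center_of_forall_commute _ fun s => ?_)
      by_cases hs : s.1 = v
      · rw [show s = ⟨v, hv⟩ from Subtype.ext hs]
      · exact commute_of_adj (by simpa using (s.2.resolve_left hs : Γ.Adj v s))
    · exact mem_sup_left ⟨of _ ⟨v, hv.resolve_left h⟩, by simp [splitHom]; rfl⟩
  have hx : x ∈ (((splitHom Γ w true).range ⊔ center _ : Subgroup _) : Set _) := by
    rw [htop]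
    exact mem_top x
  rw [mul_normal] at hx
  obtain ⟨_, ⟨h, rfl⟩, z, hz, rfl⟩ := hx
  exact ⟨h, z, hz, rfl⟩

open Classical in
noncomputable def splitOf (w v : V) : PushoutI (splitHom Γ w) :=
  if h : v = w then PushoutI.of true (of _ ⟨v, Or.inl h⟩) else PushoutI.of false (of _ ⟨v, h⟩)

theorem splitOf_eq {w v : V} (b : Bool) (hv : v ∈ splitSet Γ w b) :
    splitOf Γ w v = PushoutI.of b (of _ ⟨v, hv⟩) := by
  by_cases h : v = w <;> cases b
  · exact absurd h hv
  · simp [splitOf, h]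
  · simp [splitOf, h]
  · have hl : v ∈ linkSet Γ w := hv.resolve_left h
    simp only [splitOf, h, dite_false]
    have e : ∀ b, PushoutI.of (φ := splitHom Γ w) b
        (of _ ⟨v, linkSet_subset_splitSet Γ w b hl⟩) =
        PushoutI.base (splitHom Γ w) (of _ ⟨v, hl⟩) := fun b => by
      rw [← PushoutI.of_apply_eq_base _ b, splitHom, map_of]
      rfl
    exact (e false).trans (e true).symm

noncomputable def toSplit (w : V) : Raag Γ →* PushoutI (splitHom Γ w) :=
  lift Γ (splitOf Γ w) fun a b hab => by
    by_cases hw : a = w ∨ b = w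
    · have ha : a ∈ splitSet Γ w true := hw.elim Or.inl fun h => Or.inr (h ▸ hab).symm
      have hb : b ∈ splitSet Γ w true := hw.elim (fun h => Or.inr (h ▸ hab)) Or.inl
      rw [splitOf_eq Γ true ha, splitOf_eq Γ true hb]
      exact (commute_of_adj (by simpa using hab)).map _
    · push Not at hw
      rw [splitOf_eq Γ false hw.1, splitOf_eq Γ false hw.2]
      exact (commute_of_adj (by simpa using hab)).map _

noncomputable def ofSplit (w : V) : PushoutI (splitHom Γ w) →* Raag Γ :=
  PushoutI.lift (fun b => inclusion Γ (splitSet Γ w b)) (inclusion Γ (linkSet Γ w))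
    fun b => by ext; simp [splitHom, inclusion]; rfl

/-- `A(Γ) ≅ A(Γ - w) *_{A(lk w)} A(st w)`. -/
noncomputable def splitEquiv (w : V) : Raag Γ ≃* PushoutI (splitHom Γ w) :=
  MonoidHom.toMulEquiv (toSplit Γ w) (ofSplit Γ w)
    (by
      ext v
      by_cases h : v = w <;> simp [toSplit, ofSplit, splitOf, h])
    (PushoutI.hom_ext_nonempty fun b => by
      ext v
      simp [toSplit, ofSplit, splitOf_eq Γ b v.2])

theorem splitEquiv_of {w v : V} (b : Bool) (hv : v ∈ splitSet Γ w b) :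
    splitEquiv Γ w (of Γ v) = PushoutI.of b (of _ ⟨v, hv⟩) := by
  simp [splitEquiv, toSplit, splitOf_eq Γ b hv]

theorem splitEquiv_inclusion (w : V) (b : Bool) (x : Raag (Γ.induce (splitSet Γ w b))) :
    splitEquiv Γ w (inclusion Γ _ x) = PushoutI.of b x := by
  have : (splitEquiv Γ w).toMonoidHom.comp (inclusion Γ (splitSet Γ w b)) =
      PushoutI.of (φ := splitHom Γ w) b := by
    ext v
    simp [splitEquiv_of Γ b v.2]
  exact DFunLike.congr_fun this x

theorem exists_eq_inclusion_mul_of_conj_mem_closure {w v : V} (hvw : v ≠ w)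
    (Z : Subgroup (Raag Γ)) (hZ : Z ≤ centralizer {of Γ v})
    (hlink : ∀ t : Raag (Γ.induce {w}ᶜ),
      t * of _ ⟨v, hvw⟩ * t⁻¹ ∈ closure (of _ '' {s | s.1 ∈ linkSet Γ w}) →
      ∃ a ∈ closure (of _ '' {s | s.1 ∈ linkSet Γ w}), ∃ z, inclusion Γ _ z ∈ Z ∧ t = a * z)
    (hstar : Γ.Adj w v → ∀ z ∈ center (Raag (Γ.induce (starSet Γ w))), inclusion Γ _ z ∈ Z)
    {g : Raag Γ} (hg : g * of Γ v * g⁻¹ ∈ closure (of Γ '' {w}ᶜ)) :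
    ∃ a, ∃ z ∈ Z, g = inclusion Γ {w}ᶜ a * z := by
  set e := splitEquiv Γ w
  have he : ∀ b x, e (inclusion Γ (splitSet Γ w b) x) = PushoutI.of b x :=
    splitEquiv_inclusion Γ w
  have hv : e (of Γ v) = PushoutI.of false (of _ ⟨v, hvw⟩) := splitEquiv_of Γ false hvw
  have hZ' : Z.map e.toMonoidHom ≤ centralizer {PushoutI.of false (of _ ⟨v, hvw⟩)} := by
    rintro _ ⟨z, hz, rfl⟩
    rw [mem_centralizer_singleton_iff, ← hv]
    simpa using congrArg e (mem_centralizer_singleton_iff.1 (hZ hz))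
  have hlink' : ∀ t, t * of _ ⟨v, hvw⟩ * t⁻¹ ∈ (splitHom Γ w false).range →
      ∃ h z, PushoutI.of false z ∈ Z.map e.toMonoidHom ∧ t = splitHom Γ w false h * z := by
    intro t ht
    rw [range_splitHom] at ht
    obtain ⟨a, ha, z, hz, rfl⟩ := hlink t ht
    obtain ⟨h, rfl⟩ : a ∈ (splitHom Γ w false).range := by
      rw [range_splitHom]
      exact ha
    exact ⟨h, z, ⟨_, hz, he false z⟩, rfl⟩
  have hstar' : of _ ⟨v, hvw⟩ ∈ (splitHom Γ w false).range → ∀ j ≠ false, ∀ x,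
      ∃ h z, PushoutI.of j z ∈ Z.map e.toMonoidHom ∧ x = splitHom Γ w j h * z := by
    intro hc j hj x
    obtain rfl : j = true := by simpa using hj
    rw [range_splitHom, of_mem_closure_iff] at hc
    obtain ⟨h, z, hz, rfl⟩ := exists_eq_splitHom_true_mul_mem_center Γ w x
    exact ⟨h, z, ⟨_, hstar hc z hz, he true z⟩, rfl⟩
  have hg' : e g * PushoutI.of false (of _ ⟨v, hvw⟩) * (e g)⁻¹ ∈ (PushoutI.of false).range := by
    rw [← range_inclusion] at hg
    obtain ⟨y, hy⟩ := hg
    refine ⟨y, ?_⟩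
    rw [← hv, ← map_inv, ← map_mul, ← map_mul, ← hy]
    exact (he false y).symm
  obtain ⟨a, _, ⟨z, hz, rfl⟩, hga⟩ := PushoutI.exists_eq_mul_of_conj_mem_range
    (splitHom_injective Γ w) _ hZ' hlink' hstar' hg'
  refine ⟨a, z, hz, e.injective ?_⟩
  rw [hga, map_mul]
  exact congrArg (· * _) (he false a).symm

variable [Finite V]

theorem centralizer_of_le_closure_starSet (u : V) :
    centralizer {of Γ u} ≤ closure (of Γ '' starSet Γ u) := by
  induction hn : Nat.card V using Nat.strong_induction_on generalizing V with
  | _ n ih =>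
  intro g hg
  by_cases hstar : starSet Γ u = Set.univ
  · rw [hstar, Set.image_univ, closure_range_of]
    exact mem_top g
  obtain ⟨w, hw⟩ := (Set.ne_univ_iff_exists_notMem _).1 hstar
  have huw : u ≠ w := fun h => hw (Or.inl h.symm)
  have hwu : ¬Γ.Adj w u := fun h => hw (Or.inr h.symm)
  have hcard : Nat.card ({w}ᶜ : Set V) < n := hn ▸ Finite.card_subtype_lt (x := w) (by simp)
  have hgu : g * of Γ u * g⁻¹ ∈ closure (of Γ '' {w}ᶜ) := by
    rw [mem_centralizer_singleton_iff.1 hg, mul_inv_cancel_right]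
    exact subset_closure ⟨u, huw, rfl⟩
  obtain ⟨a, z, hz, rfl⟩ := exists_eq_inclusion_mul_of_conj_mem_closure Γ huw ⊥ bot_le
    (fun t ht => absurd (mem_of_conj_mem_closure _ ht) hwu) (fun h => absurd h hwu) hgu
  rw [mem_bot.1 hz, mul_one] at hg ⊢
  have ha : a ∈ centralizer {of _ ⟨u, huw⟩} := by
    rw [mem_centralizer_singleton_iff] at hg ⊢
    exact inclusion_injective Γ _ (by simpa using hg)
  have := mem_map_of_mem (inclusion Γ _) (ih _ hcard (Γ.induce {w}ᶜ) ⟨u, huw⟩ rfl ha)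
  rw [map_inclusion_closure_of] at this
  exact closure_mono (Set.image_mono (image_val_starSet_induce_subset Γ {w}ᶜ ⟨u, huw⟩)) this

theorem exists_eq_mul_of_conj_mem_closure {S : Set V} {v : V} {g : Raag Γ}
    (hg : g * of Γ v * g⁻¹ ∈ closure (of Γ '' S)) :
    ∃ a ∈ closure (of Γ '' S), ∃ z ∈ centralizer {of Γ v}, g = a * z := by
  induction hn : Nat.card V using Nat.strong_induction_on generalizing V with
  | _ n ih =>
  by_cases hS : S = Set.univ
  · refine ⟨g, ?_, 1, one_mem _, (mul_one g).symm⟩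
    rw [hS, Set.image_univ, closure_range_of]
    exact mem_top g
  obtain ⟨u, hu⟩ := (Set.ne_univ_iff_exists_notMem _).1 hS
  have hvu : v ≠ u := fun h => hu (h ▸ mem_of_conj_mem_closure Γ hg)
  have hcard : Nat.card ({u}ᶜ : Set V) < n := hn ▸ Finite.card_subtype_lt (x := u) (by simp)
  have hSu : S ⊆ {u}ᶜ := fun s hs h => hu (h ▸ hs)
  have hSmap : (closure (of _ '' (Subtype.val ⁻¹' S : Set ({u}ᶜ : Set V)))).map
      (inclusion Γ {u}ᶜ) = closure (of Γ '' S) := by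
    rw [map_inclusion_closure_of, Subtype.image_preimage_coe, Set.inter_eq_right.2 hSu]
  obtain ⟨a, z, hz, rfl⟩ := exists_eq_inclusion_mul_of_conj_mem_closure Γ hvu
    (centralizer {of Γ v}) le_rfl
    (fun t ht => by
      obtain ⟨a, ha, z, hz, rfl⟩ := ih _ hcard (Γ.induce {u}ᶜ) ht rfl
      exact ⟨a, ha, z, inclusion_mem_centralizer_of Γ hz, rfl⟩)
    (fun hadj z hz => by
      simpa using inclusion_mem_centralizer_of Γ (v := ⟨v, Or.inr hadj⟩)
        (mem_centralizer_singleton_iff.2 (mem_center_iff.1 hz _).symm))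
    (closure_mono (Set.image_mono hSu) hg)
  have ha : a * of _ ⟨v, hvu⟩ * a⁻¹ ∈ closure (of _ '' (Subtype.val ⁻¹' S)) := by
    rw [← mem_map_iff_mem (inclusion_injective Γ _), hSmap]
    rw [Commute.conj_mul_eq_conj (mem_centralizer_singleton_iff.1 hz)] at hg
    simpa using hg
  obtain ⟨a', ha', z', hz', rfl⟩ := ih _ hcard (Γ.induce {u}ᶜ) ha rfl
  refine ⟨inclusion Γ _ a', ?_, inclusion Γ _ z' * z,
    mul_mem (inclusion_mem_centralizer_of Γ hz') hz, by rw [map_mul, mul_assoc]⟩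
  rw [← hSmap]
  exact mem_map_of_mem _ ha'

end Raag

open Raag in
/-- for distinct vertices `u, v`, the conjugates `u^x` and `v^y` commute iff
`[u,v] = 1` and `x y⁻¹ ∈ Z(u) Z(v)`. -/
theorem conjugates_commute_iff {V : Type*} [Fintype V] (Γ : SimpleGraph V)
    (u v : V) (huv : u ≠ v) (x y : Raag Γ) :
    Commute (x⁻¹ * Raag.of Γ u * x) (y⁻¹ * Raag.of Γ v * y) ↔
      Commute (Raag.of Γ u) (Raag.of Γ v) ∧
      ∃ g ∈ Subgroup.centralizer {Raag.of Γ u},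
        ∃ h ∈ Subgroup.centralizer {Raag.of Γ v}, x * y⁻¹ = g * h := by
  rw [commute_conj_iff_commute_conj_mul_inv]
  constructor
  · intro hcomm
    have hz : x * y⁻¹ * of Γ v * (x * y⁻¹)⁻¹ ∈ closure (of Γ '' starSet Γ u) :=
      centralizer_of_le_closure_starSet Γ u (mem_centralizer_singleton_iff.2 hcomm.eq.symm)
    have hadj : Γ.Adj u v := (mem_of_conj_mem_closure Γ hz).resolve_left huv.symm
    obtain ⟨g, hg, h, hh, hgh⟩ := exists_eq_mul_of_conj_mem_closure Γ hz
    exact ⟨commute_of_adj hadj, g, closure_starSet_le_centralizer_of Γ u hg, h, hh, hgh⟩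
  · rintro ⟨hcomm, g, hg, h, hh, hgh⟩
    rw [hgh]
    exact hcomm.conj_mul_of_mem_centralizer hg hh
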